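/- Let Σ be a nonzero real symmetric positive-semidefinite N×N matrix, let K be a real symmetric positive-definite T×T matrix with (1/T)·Tr(K) = 1, and let q > 0 and λ > 0. Suppose κ_c > 0 and κ̃_c > 0 satisfy df¹_K(κ̃_c) = q·df¹_Σ(κ_c) and κ_c·κ̃_c·q·df¹_Σ(κ_c) = λ, and suppose κ_u > 0 satisfies κ_u·(1 − q·df¹_Σ(κ_u)) = λ. Define κ̃_u = (1 − q·df¹_Σ(κ_u))/(q·df¹_Σ(κ_u)), the corresponding dual renormalized ridge for uncorrelated data. Then κ̃_c ≤ κ̃_u. -/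

import Mathlib

open Matrix

/-- First degrees of freedom: `df¹_A(κ) = (1/n)·Tr(A(A + κI)⁻¹)`. -/
noncomputable def df1 {n : ℕ} (A : Matrix (Fin n) (Fin n) ℝ) (κ : ℝ) : ℝ :=
  (1 / (n : ℝ)) * (A * (A + κ • (1 : Matrix (Fin n) (Fin n) ℝ))⁻¹).trace

/-- Second degrees of freedom: `df²_A(κ) = (1/n)·Tr(A²(A + κI)⁻²)`. -/
noncomputable def df2 {n : ℕ} (A : Matrix (Fin n) (Fin n) ℝ) (κ : ℝ) : ℝ :=
  (1 / (n : ℝ)) * (A ^ 2 * ((A + κ • (1 : Matrix (Fin n) (Fin n) ℝ))⁻¹) ^ 2).trace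

/-!
Jensen's inequality for the concave map `x ↦ x / (x + κ̃)` on the spectrum of `K`, whose mean is
`1`, gives `df¹_K(κ̃) ≤ 1 / (1 + κ̃)`; hence `q·df¹_Σ(κ_c)·(1 + κ̃_c) ≤ 1` and
`λ ≤ κ_c·(1 − q·df¹_Σ(κ_c))`. As `κ ↦ κ·(1 − q·df¹_Σ(κ))` is increasing where positive and
equals `λ` at `κ_u`, this forces `κ_u ≤ κ_c`. Then `κ·df¹_Σ(κ)` being increasing gives
`κ_u·df¹_Σ(κ_u) ≤ κ_c·df¹_Σ(κ_c)`, and comparing the two expressions for `λ` yields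
`κ̃_c·q·df¹_Σ(κ_u) ≤ 1 − q·df¹_Σ(κ_u)`.
-/

open Set

namespace Matrix.IsHermitian

variable {n : Type*} [Fintype n] [DecidableEq n] {A : Matrix n n ℝ}

lemma trace_cfc (hA : A.IsHermitian) (f : ℝ → ℝ) :
    (cfc f A).trace = ∑ i, f (hA.eigenvalues i) := by
  rw [cfc_eq hA, IsHermitian.cfc, Unitary.conjStarAlgAut_apply, trace_mul_cycle,
    Unitary.coe_star_mul_self, one_mul, trace_diagonal]
  rfl

lemma mul_inv_add_smul_one_eq_cfc (hA : A.IsHermitian) {κ : ℝ}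
    (hκ : ∀ i, hA.eigenvalues i + κ ≠ 0) :
    A * (A + κ • 1)⁻¹ = cfc (fun x ↦ x / (x + κ)) A := by
  rw [cfc_map_div (fun x ↦ x) (fun x ↦ x + κ) A, cfc_id' ℝ A, cfc_add_const κ (fun x ↦ x) A,
    cfc_id' ℝ A, Algebra.algebraMap_eq_smul_one, nonsing_inv_eq_ringInverse]
  rw [hA.spectrum_real_eq_range_eigenvalues]
  rintro _ ⟨i, rfl⟩
  exact hκ i

lemma trace_mul_inv_add_smul_one (hA : A.IsHermitian) {κ : ℝ}
    (hκ : ∀ i, hA.eigenvalues i + κ ≠ 0) :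
    (A * (A + κ • 1)⁻¹).trace = ∑ i, hA.eigenvalues i / (hA.eigenvalues i + κ) := by
  rw [hA.mul_inv_add_smul_one_eq_cfc hκ, hA.trace_cfc]

end Matrix.IsHermitian

/-- The tangent line at `x = 1` of the concave function `x ↦ x / (x + κ)`. -/
lemma div_add_le_tangent {x κ : ℝ} (hκ : 0 ≤ κ) (hxκ : 0 < x + κ) :
    x / (x + κ) ≤ 1 / (1 + κ) + κ / (1 + κ) ^ 2 * (x - 1) := by
  have h1κ : 0 < 1 + κ := by linarith
  rw [div_le_iff₀ hxκ]
  have hgap : (1 / (1 + κ) + κ / (1 + κ) ^ 2 * (x - 1)) * (x + κ) - x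
      = κ * (x - 1) ^ 2 / (1 + κ) ^ 2 := by
    field_simp
    ring
  have : 0 ≤ κ * (x - 1) ^ 2 / (1 + κ) ^ 2 := by positivity
  linarith

namespace Matrix.PosSemidef

variable {n : ℕ} {A : Matrix (Fin n) (Fin n) ℝ}

lemma df1_eq_sum_eigenvalues (hA : A.PosSemidef) {κ : ℝ} (hκ : 0 < κ) :
    df1 A κ = 1 / (n : ℝ) * ∑ i, hA.1.eigenvalues i / (hA.1.eigenvalues i + κ) := by
  rw [df1, hA.1.trace_mul_inv_add_smul_one fun i ↦ (by linarith [hA.eigenvalues_nonneg i])]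

lemma df1_pos (hA : A.PosSemidef) (hA0 : A ≠ 0) {κ : ℝ} (hκ : 0 < κ) : 0 < df1 A κ := by
  obtain ⟨i, hi⟩ := Function.ne_iff.mp (hA.1.eigenvalues_eq_zero_iff.not.mpr hA0)
  have hμi : 0 < hA.1.eigenvalues i := (hA.eigenvalues_nonneg i).lt_of_ne' hi
  have hn : (0 : ℝ) < n := Nat.cast_pos.mpr i.pos
  rw [hA.df1_eq_sum_eigenvalues hκ]
  refine mul_pos (by positivity) (Finset.sum_pos' (fun j _ ↦ ?_) ⟨i, Finset.mem_univ i, ?_⟩)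
  · have := hA.eigenvalues_nonneg j
    positivity
  · positivity

lemma df1_antitoneOn (hA : A.PosSemidef) : AntitoneOn (df1 A) (Ioi 0) := by
  intro κ₁ hκ₁ κ₂ hκ₂ hκ
  rw [hA.df1_eq_sum_eigenvalues hκ₁, hA.df1_eq_sum_eigenvalues hκ₂]
  have hμ := hA.eigenvalues_nonneg
  have : (0 : ℝ) < κ₁ := hκ₁
  gcongr with i
  · exact hμ i
  · linarith [hμ i]

lemma monotoneOn_mul_df1 (hA : A.PosSemidef) :
    MonotoneOn (fun κ ↦ κ * df1 A κ) (Ioi 0) := by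
  intro κ₁ hκ₁ κ₂ hκ₂ hκ
  set μ := hA.1.eigenvalues
  have hμ : ∀ i, 0 ≤ μ i := hA.eigenvalues_nonneg
  have hsum : ∀ κ > 0, κ * df1 A κ = 1 / (n : ℝ) * ∑ i, (μ i - μ i ^ 2 / (μ i + κ)) := by
    intro κ hκ
    rw [hA.df1_eq_sum_eigenvalues hκ]
    change κ * (1 / (n : ℝ) * ∑ i, μ i / (μ i + κ)) = _
    rw [mul_left_comm, Finset.mul_sum]
    congr 1
    refine Finset.sum_congr rfl fun i _ ↦ ?_
    have : 0 < μ i + κ := by linarith [hμ i]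
    field_simp
    ring
  simp only [hsum κ₁ hκ₁, hsum κ₂ hκ₂]
  have : (0 : ℝ) < κ₁ := hκ₁
  gcongr with i
  linarith [hμ i]

lemma df1_le_one_div_one_add (hA : A.PosSemidef) (htr : 1 / (n : ℝ) * A.trace = 1) {κ : ℝ}
    (hκ : 0 < κ) : df1 A κ ≤ 1 / (1 + κ) := by
  set μ := hA.1.eigenvalues
  have hn : (n : ℝ) ≠ 0 := by
    rintro hn
    simp [hn] at htr
  have hmean : 1 / (n : ℝ) * ∑ i, μ i = 1 := by
    simpa [hA.1.trace_eq_sum_eigenvalues] using htr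
  rw [hA.df1_eq_sum_eigenvalues hκ]
  calc 1 / (n : ℝ) * ∑ i, μ i / (μ i + κ)
      ≤ 1 / (n : ℝ) * ∑ i, (1 / (1 + κ) + κ / (1 + κ) ^ 2 * (μ i - 1)) := by
        gcongr with i
        exact div_add_le_tangent hκ.le (by linarith [hA.eigenvalues_nonneg i])
    _ = 1 / (1 + κ) + κ / (1 + κ) ^ 2 * (1 / (n : ℝ) * ∑ i, μ i - 1) := by
        rw [Finset.sum_add_distrib, ← Finset.mul_sum, Finset.sum_sub_distrib]
        simp only [Finset.sum_const, Finset.card_univ, Fintype.card_fin, nsmul_eq_mul, mul_one]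
        field_simp
    _ = 1 / (1 + κ) := by rw [hmean, sub_self, mul_zero, add_zero]

end Matrix.PosSemidef

/-- Where `κ ↦ κ * (1 - g κ)` is positive it is strictly increasing, both factors being
increasing. -/
lemma le_of_mul_one_sub_le {g : ℝ → ℝ} (hg : AntitoneOn g (Ioi 0)) {κ₁ κ₂ : ℝ}
    (hκ₁ : 0 < κ₁) (hκ₂ : 0 < κ₂) (hpos : 0 < κ₂ * (1 - g κ₂))
    (hle : κ₂ * (1 - g κ₂) ≤ κ₁ * (1 - g κ₁)) : κ₂ ≤ κ₁ := by
  by_contra! hlt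
  have hg₂ : g κ₂ ≤ g κ₁ := hg hκ₁ hκ₂ hlt.le
  have h1g : 0 < 1 - g κ₂ := pos_of_mul_pos_right hpos hκ₂.le
  nlinarith

theorem stmt6_general {N T : ℕ} (Sg : Matrix (Fin N) (Fin N) ℝ) (hSg : Sg.PosSemidef)
    (hSg0 : Sg ≠ 0)
    (K : Matrix (Fin T) (Fin T) ℝ) (hK : K.PosDef)
    (htr : (1 / (T : ℝ)) * K.trace = 1)
    (q lam κc κtc κu : ℝ) (hq : 0 < q)
    (hκc : 0 < κc) (hκtc : 0 < κtc)
    (h1 : df1 K κtc = q * df1 Sg κc)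
    (h2 : κc * κtc * (q * df1 Sg κc) = lam)
    (hκu : 0 < κu) (h3 : κu * (1 - q * df1 Sg κu) = lam) :
    κtc ≤ (1 - q * df1 Sg κu) / (q * df1 Sg κu) := by
  have hgc : 0 < q * df1 Sg κc := mul_pos hq (hSg.df1_pos hSg0 hκc)
  have hgu : 0 < q * df1 Sg κu := mul_pos hq (hSg.df1_pos hSg0 hκu)
  have hjensen : q * df1 Sg κc * (1 + κtc) ≤ 1 := by
    rw [← h1, ← le_div_iff₀ (by positivity)]
    exact hK.posSemidef.df1_le_one_div_one_add htr hκtc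
  have hκu_le : κu ≤ κc := by
    refine le_of_mul_one_sub_le (g := fun κ ↦ q * df1 Sg κ)
      (fun a ha b hb hab ↦ mul_le_mul_of_nonneg_left (hSg.df1_antitoneOn ha hb hab) hq.le)
      hκc hκu ?_ ?_
    · rw [h3, ← h2]
      positivity
    · rw [h3, ← h2]
      nlinarith
  have hmul : κu * df1 Sg κu ≤ κc * df1 Sg κc := hSg.monotoneOn_mul_df1 hκu hκc hκu_le
  rw [le_div_iff₀ hgu]
  refine le_of_mul_le_mul_left ?_ hκu
  calc κu * (κtc * (q * df1 Sg κu)) = κtc * q * (κu * df1 Sg κu) := by ring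
    _ ≤ κtc * q * (κc * df1 Sg κc) := by gcongr
    _ = κu * (1 - q * df1 Sg κu) := by rw [h3, ← h2]; ring

/-- with `κ̃_u = (1 − q·df¹_Σ(κ_u))/(q·df¹_Σ(κ_u))` the dual renormalized
ridge for uncorrelated data, one has `κ̃_c ≤ κ̃_u`. -/
theorem stmt6 {N T : ℕ} (Sg : Matrix (Fin N) (Fin N) ℝ) (hSg : Sg.PosSemidef)
    (hSg0 : Sg ≠ 0)
    (K : Matrix (Fin T) (Fin T) ℝ) (hK : K.PosDef)
    (htr : (1 / (T : ℝ)) * K.trace = 1)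
    (q lam κc κtc κu : ℝ) (hq : 0 < q) (hlam : 0 < lam)
    (hκc : 0 < κc) (hκtc : 0 < κtc)
    (h1 : df1 K κtc = q * df1 Sg κc)
    (h2 : κc * κtc * (q * df1 Sg κc) = lam)
    (hκu : 0 < κu) (h3 : κu * (1 - q * df1 Sg κu) = lam) :
    κtc ≤ (1 - q * df1 Sg κu) / (q * df1 Sg κu) :=
  stmt6_general Sg hSg hSg0 K hK htr q lam κc κtc κu hq hκc hκtc h1 h2 hκu h3
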